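/- With Z symmetric positive definite, Γ and Λ complementary selection matrices, and W = Γᵀ(ΓZΓᵀ)⁻¹Γ, one has (ΛZ⁻¹Λᵀ)(Λ(Z − ZWZ)Λᵀ) = I, i.e., Λ(Z − ZWZ)Λᵀ is the inverse of ΛZ⁻¹Λᵀ. -/

import Mathlib

/-!
Put `S = Z - Z W Z`. As `Γ` has orthonormal rows, `Γ Z Γᵀ` is positive definite, hence
invertible, and `Γ S = Γ Z - (Γ Z Γᵀ)(Γ Z Γᵀ)⁻¹ Γ Z = 0`. Then `Λᵀ Λ S = (1 - Γᵀ Γ) S = S`, so the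
product collapses to `Λ Z⁻¹ S Λᵀ = Λ (1 - W Z) Λᵀ = Λ Λᵀ - (Λ Γᵀ) ⋯ = 1`.
-/

open Matrix

namespace Matrix

variable {l n R : Type*} [Fintype l] [Fintype n]

lemma vecMul_injective_of_mul_eq_one [DecidableEq l] [Semiring R] {A : Matrix l n R}
    {B : Matrix n l R} (h : A * B = 1) : Function.Injective A.vecMul :=
  Function.LeftInverse.injective (g := (· ᵥ* B)) fun v =>
    (vecMul_vecMul v A B).trans (by rw [h, vecMul_one])

lemma PosDef.mul_mul_transpose_of_mul_transpose_eq_one [DecidableEq l] [CommRing R]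
    [PartialOrder R] [StarRing R] [TrivialStar R] {Z : Matrix n n R} (hZ : Z.PosDef)
    {Γ : Matrix l n R} (hΓ : Γ * Γᵀ = 1) :
    (Γ * Z * Γᵀ).PosDef := by
  simpa only [conjTranspose_eq_transpose_of_trivial] using
    hZ.mul_mul_conjTranspose_same (vecMul_injective_of_mul_eq_one hΓ)

variable [CommRing R]

lemma mul_sub_mul_mul_eq_zero [DecidableEq l] {Z W : Matrix n n R} {Γ : Matrix l n R}
    (hA : IsUnit (Γ * Z * Γᵀ).det) (hW : W = Γᵀ * (Γ * Z * Γᵀ)⁻¹ * Γ) :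
    Γ * (Z - Z * W * Z) = 0 := by
  have hΓZWZ : Γ * (Z * W * Z) = Γ * Z * Γᵀ * (Γ * Z * Γᵀ)⁻¹ * (Γ * Z) := by
    simp only [hW, Matrix.mul_assoc]
  rw [Matrix.mul_sub, hΓZWZ, mul_nonsing_inv _ hA, Matrix.one_mul, sub_self]

lemma transpose_mul_mul_eq_self_of_mul_eq_zero [DecidableEq n] {q : Type*} [Fintype q]
    {Γ : Matrix l n R} {Λ : Matrix q n R} (hcompl : Γᵀ * Γ + Λᵀ * Λ = 1) {S : Matrix n n R}
    (hS : Γ * S = 0) :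
    Λᵀ * Λ * S = S := by
  calc Λᵀ * Λ * S = (Γᵀ * Γ + Λᵀ * Λ) * S := by
        rw [Matrix.add_mul, Matrix.mul_assoc Γᵀ, hS, Matrix.mul_zero, zero_add]
    _ = S := by rw [hcompl, Matrix.one_mul]

end Matrix

theorem selection_product_identity_general
    (m p q : ℕ)
    (Γ : Matrix (Fin p) (Fin m) ℝ) (Λ : Matrix (Fin q) (Fin m) ℝ)
    (hΓΓ : Γ * Γᵀ = 1) (hΛΛ : Λ * Λᵀ = 1)
    (hcompl : Γᵀ * Γ + Λᵀ * Λ = 1) (hΛΓ : Λ * Γᵀ = 0)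
    (Z : Matrix (Fin m) (Fin m) ℝ) (hZ : Z.PosDef)
    (W : Matrix (Fin m) (Fin m) ℝ) (hW : W = Γᵀ * (Γ * Z * Γᵀ)⁻¹ * Γ) :
    (Λ * Z⁻¹ * Λᵀ) * (Λ * (Z - Z * W * Z) * Λᵀ) = 1 := by
  have hA : IsUnit (Γ * Z * Γᵀ).det :=
    (isUnit_iff_isUnit_det _).1 (hZ.mul_mul_transpose_of_mul_transpose_eq_one hΓΓ).isUnit
  have hΓS := mul_sub_mul_mul_eq_zero hA hW
  have hΛW : Λ * W = 0 := by
    rw [hW, ← Matrix.mul_assoc, ← Matrix.mul_assoc, hΛΓ, Matrix.zero_mul, Matrix.zero_mul]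
  calc (Λ * Z⁻¹ * Λᵀ) * (Λ * (Z - Z * W * Z) * Λᵀ)
      = Λ * Z⁻¹ * (Λᵀ * Λ * (Z - Z * W * Z)) * Λᵀ := by simp only [Matrix.mul_assoc]
    _ = Λ * (Z⁻¹ * Z) * Λᵀ - Λ * (Z⁻¹ * Z) * W * (Z * Λᵀ) := by
        rw [transpose_mul_mul_eq_self_of_mul_eq_zero hcompl hΓS]
        simp only [Matrix.mul_sub, Matrix.sub_mul, Matrix.mul_assoc]
    _ = 1 := by
        rw [nonsing_inv_mul _ ((isUnit_iff_isUnit_det _).1 hZ.isUnit), Matrix.mul_one, hΛΛ, hΛW,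
          Matrix.zero_mul, sub_zero]

theorem selection_product_identity
    (m p q : ℕ) (hm : 0 < m)
    (Γ : Matrix (Fin p) (Fin m) ℝ) (Λ : Matrix (Fin q) (Fin m) ℝ)
    (hΓΓ : Γ * Γᵀ = 1) (hΛΛ : Λ * Λᵀ = 1)
    (hcompl : Γᵀ * Γ + Λᵀ * Λ = 1) (hΛΓ : Λ * Γᵀ = 0)
    (Z : Matrix (Fin m) (Fin m) ℝ) (hZ : Z.PosDef)
    (W : Matrix (Fin m) (Fin m) ℝ) (hW : W = Γᵀ * (Γ * Z * Γᵀ)⁻¹ * Γ) :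
    (Λ * Z⁻¹ * Λᵀ) * (Λ * (Z - Z * W * Z) * Λᵀ) = 1 :=
  selection_product_identity_general m p q Γ Λ hΓΓ hΛΛ hcompl hΛΓ Z hZ W hW
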